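/- Let α, β : Fin d → (Fin d → ℂ) be arbitrary families of vectors, and let x be the vector indexed by Fin d × (Fin d × Fin d) defined by x (i,(p,q)) = α_i(p) · β_i(q). Then ⟨x, A x⟩ = Σ_{s,s'} conj(x s) · A[s, s'] · x s' equals 0 if and only if for every i : Fin d, α_i = 0 or β_i = 0. (This is the matrix-theoretic core of Lemma 3: two pure inputs to a single use of the channel N_d have exactly orthogonal outputs iff for each computational-basis index at most one of the corresponding component vectors is nonzero.) -/

import Mathlib

open Matrix Kronecker

/-- Projector onto the maximally entangled state: Φ[(i,j),(k,l)] = 1/d if i=j and k=l. -/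
noncomputable def Phi (d : ℕ) : Matrix (Fin d × Fin d) (Fin d × Fin d) ℂ :=
  fun p q => if p.1 = p.2 ∧ q.1 = q.2 then ((d : ℂ))⁻¹ else 0

/-- Coefficients a i k: 1 on the diagonal, -1/(d²-1) off the diagonal. -/
noncomputable def aCoef (d : ℕ) (i k : Fin d) : ℝ :=
  if i = k then 1 else -1 / ((d : ℝ) ^ 2 - 1)

/-- The matrix A = Σ_{i,k} E_{ik} ⊗ₖ (a i k • (I − Φ) + Φ). -/
noncomputable def Amat (d : ℕ) : Matrix (Fin d × (Fin d × Fin d)) (Fin d × (Fin d × Fin d)) ℂ :=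
  ∑ i : Fin d, ∑ k : Fin d,
    (Matrix.single i k (1 : ℂ)) ⊗ₖ
      (aCoef d i k • ((1 : Matrix (Fin d × Fin d) (Fin d × Fin d) ℂ) - Phi d) + Phi d)

/-!
Write `v i = α i ⊗ β i` for the blocks of `x` and `P = 1 - Φ`. Since `P` and `Φ` are orthogonal
projections, `⟨x, A x⟩ = ∑ i k, a i k ⟪P v i, P v k⟫ + ‖∑ i, Φ v i‖²`. The coefficient matrix
`a = (d² I - J) / (d² - 1)` is bounded below by `d / (d + 1)` (by Cauchy–Schwarz,
`‖∑ i, u i‖² ≤ d ∑ i, ‖u i‖²`), so `⟨x, A x⟩ = 0` forces `P v i = 0`: every `α i ⊗ β i` is a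
multiple of the maximally entangled vector. For `d ≥ 2` a rank-one matrix `α βᵀ` proportional to
the identity is zero.
-/

open scoped ComplexOrder

namespace Matrix

section BlockQuadraticForm

variable {m n R : Type*} [Fintype m] [DecidableEq m] [CommSemiring R]

theorem sum_single_kronecker_apply (B : m → m → Matrix n n R) (i k : m) (s t : n) :
    (∑ i', ∑ k', single i' k' (1 : R) ⊗ₖ B i' k') (i, s) (k, t) = B i k s t := by
  simp [sum_apply, kroneckerMap_apply, single_apply, ite_and]

theorem star_dotProduct_sum_single_kronecker_mulVec [Fintype n] [StarRing R]
    (B : m → m → Matrix n n R) (x : m × n → R) :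
    star x ⬝ᵥ ((∑ i, ∑ k, single i k (1 : R) ⊗ₖ B i k) *ᵥ x) =
      ∑ i, ∑ k, star (fun s => x (i, s)) ⬝ᵥ (B i k *ᵥ fun t => x (k, t)) := by
  simp only [dotProduct, mulVec, Fintype.sum_prod_type, sum_single_kronecker_apply,
    Finset.mul_sum, Pi.star_apply]
  refine Finset.sum_congr rfl fun i _ => ?_
  rw [Finset.sum_comm]

end BlockQuadraticForm

theorem isStarProjection_vecMulVec {n R : Type*} [Fintype n] [CommSemiring R] [StarRing R]
    {φ : n → R} (hφ : star φ ⬝ᵥ φ = 1) : IsStarProjection (vecMulVec φ (star φ)) where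
  isIdempotentElem := by rw [IsIdempotentElem, vecMulVec_mul_vecMulVec, hφ, one_smul]
  isSelfAdjoint := by rw [IsSelfAdjoint, star_eq_conjTranspose, conjTranspose_vecMulVec, star_star]

theorem eq_zero_or_eq_zero_of_vecMulVec_eq_smul_one {n K : Type*} [DecidableEq n] [Nontrivial n]
    [Semiring K] [NoZeroDivisors K] {α β : n → K} {c : K} (h : vecMulVec α β = c • 1) :
    α = 0 ∨ β = 0 := by
  have entry (p q : n) : α p * β q = if p = q then c else 0 := by
    simpa [vecMulVec_apply, one_apply] using congrFun (congrFun h p) q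
  by_contra! hne
  obtain ⟨p, hp⟩ := Function.ne_iff.1 hne.1
  obtain ⟨q, hq⟩ := Function.ne_iff.1 hne.2
  have hpq : p = q := by
    by_contra hpq
    simpa [entry, hpq] using mul_ne_zero hp hq
  subst hpq
  obtain ⟨r, hrp⟩ := exists_ne p
  have hc : c ≠ 0 := by simpa [entry] using mul_ne_zero hp hq
  have hr : β r ≠ 0 := right_ne_zero_of_mul (by simpa [entry] using hc : α r * β r ≠ 0)
  simpa [entry, hrp.symm] using mul_ne_zero hp hr

end Matrix

theorem IsStarProjection.star_dotProduct_mulVec {n R : Type*} [Fintype n] [CommSemiring R]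
    [StarRing R] {M : Matrix n n R} (hM : IsStarProjection M) (v w : n → R) :
    star v ⬝ᵥ (M *ᵥ w) = star (M *ᵥ v) ⬝ᵥ (M *ᵥ w) := by
  have hMH : Mᴴ = M := hM.isSelfAdjoint
  rw [star_mulVec, ← dotProduct_mulVec, mulVec_mulVec, hMH, hM.isIdempotentElem.eq]

theorem star_sum_dotProduct_sum_le {ι n : Type*} [Fintype ι] [Fintype n] (u : ι → n → ℂ) :
    star (∑ i, u i) ⬝ᵥ ∑ i, u i ≤ Fintype.card ι * ∑ i, star (u i) ⬝ᵥ u i := by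
  have expand : ∑ i, ∑ k, star (u i - u k) ⬝ᵥ (u i - u k) =
      2 * (Fintype.card ι * ∑ i, star (u i) ⬝ᵥ u i - star (∑ i, u i) ⬝ᵥ ∑ i, u i) := by
    simp only [star_sub, sub_dotProduct, dotProduct_sub, Finset.sum_sub_distrib, star_sum,
      sum_dotProduct, dotProduct_sum, Finset.sum_const, Finset.card_univ, nsmul_eq_mul]
    rw [Finset.sum_comm (f := fun i k => star (u k) ⬝ᵥ u i), ← Finset.mul_sum]
    ring
  rw [← sub_nonneg, ← inv_mul_cancel_left₀ two_ne_zero (_ - _), ← expand]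
  exact mul_nonneg (by positivity)
    (Finset.sum_nonneg fun i _ => Finset.sum_nonneg fun k _ => dotProduct_star_self_nonneg _)

noncomputable def maxEntangled (d : ℕ) : Fin d × Fin d → ℂ :=
  fun p => if p.1 = p.2 then ((√(d : ℝ) : ℂ))⁻¹ else 0

theorem maxEntangled_mul_star_maxEntangled (d : ℕ) (p q : Fin d × Fin d) :
    maxEntangled d p * star (maxEntangled d q) = Phi d p q := by
  have hsq : ((√(d : ℝ) : ℂ))⁻¹ * ((√(d : ℝ) : ℂ))⁻¹ = (d : ℂ)⁻¹ := by
    rw [← mul_inv, ← Complex.ofReal_mul, Real.mul_self_sqrt d.cast_nonneg, Complex.ofReal_natCast]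
  simp only [maxEntangled, Phi, apply_ite star, star_zero, star_inv₀, Complex.star_def,
    Complex.conj_ofReal]
  split_ifs <;> simp_all

theorem Phi_eq_vecMulVec (d : ℕ) : Phi d = vecMulVec (maxEntangled d) (star (maxEntangled d)) := by
  ext p q
  exact (maxEntangled_mul_star_maxEntangled d p q).symm

theorem star_maxEntangled_dotProduct_self {d : ℕ} (hd : d ≠ 0) :
    star (maxEntangled d) ⬝ᵥ maxEntangled d = 1 := by
  simp only [dotProduct, Pi.star_apply, mul_comm (star _), maxEntangled_mul_star_maxEntangled,
    Phi, Fintype.sum_prod_type]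
  simp [hd]

theorem isStarProjection_Phi {d : ℕ} (hd : d ≠ 0) : IsStarProjection (Phi d) :=
  Phi_eq_vecMulVec d ▸ isStarProjection_vecMulVec (star_maxEntangled_dotProduct_self hd)

theorem star_dotProduct_Amat_mulVec {d : ℕ} (hd : d ≠ 0) (x : Fin d × (Fin d × Fin d) → ℂ) :
    star x ⬝ᵥ (Amat d *ᵥ x) =
      ∑ i, ∑ k, (aCoef d i k : ℂ) *
          (star ((1 - Phi d) *ᵥ fun s => x (i, s)) ⬝ᵥ ((1 - Phi d) *ᵥ fun s => x (k, s))) +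
        star (∑ i, Phi d *ᵥ fun s => x (i, s)) ⬝ᵥ ∑ i, Phi d *ᵥ fun s => x (i, s) := by
  have hΦ := isStarProjection_Phi hd
  simp only [Amat, star_dotProduct_sum_single_kronecker_mulVec, add_mulVec, dotProduct_add,
    smul_mulVec, dotProduct_smul, Finset.sum_add_distrib, Complex.real_smul, star_sum,
    sum_dotProduct, dotProduct_sum]
  refine congrArg₂ (· + ·) (Finset.sum_congr rfl fun i _ => Finset.sum_congr rfl fun k _ => ?_) ?_
  · rw [hΦ.one_sub.star_dotProduct_mulVec]
  · rw [Finset.sum_comm (f := fun _ _ => star (Phi d *ᵥ _) ⬝ᵥ _)]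
    exact Finset.sum_congr rfl fun i _ => Finset.sum_congr rfl fun k _ =>
      hΦ.star_dotProduct_mulVec _ _

theorem mul_sum_star_dotProduct_self_le_sum_aCoef_mul {d : ℕ} (hd : 2 ≤ d) {n : Type*}
    [Fintype n] (u : Fin d → n → ℂ) :
    (d / (d + 1) : ℂ) * ∑ i, star (u i) ⬝ᵥ u i ≤
      ∑ i, ∑ k, (aCoef d i k : ℂ) * (star (u i) ⬝ᵥ u k) := by
  set b : ℂ := -1 / ((d : ℂ) ^ 2 - 1)
  have hcoef (i k : Fin d) : (aCoef d i k : ℂ) = b + if i = k then 1 - b else 0 := by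
    unfold aCoef; split_ifs <;> push_cast <;> ring
  have hsplit : ∑ i, ∑ k, (aCoef d i k : ℂ) * (star (u i) ⬝ᵥ u k) =
      b * (star (∑ i, u i) ⬝ᵥ ∑ i, u i) + (1 - b) * ∑ i, star (u i) ⬝ᵥ u i := by
    simp only [hcoef, add_mul, ite_mul, zero_mul, Finset.sum_add_distrib, Finset.sum_ite_eq,
      Finset.mem_univ, if_true, ← Finset.mul_sum, star_sum, sum_dotProduct, dotProduct_sum]
    rw [Finset.sum_comm]
  have hd_sq : (d : ℂ) ^ 2 - 1 ≠ 0 := by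
    rw [sub_ne_zero]; exact_mod_cast (Nat.one_lt_pow two_ne_zero hd).ne'
  have hd_succ : (d : ℂ) + 1 ≠ 0 := by exact_mod_cast d.succ_ne_zero
  rw [← sub_nonneg, hsplit,
    show b * (star (∑ i, u i) ⬝ᵥ ∑ i, u i) + (1 - b) * ∑ i, star (u i) ⬝ᵥ u i -
        (d / (d + 1) : ℂ) * ∑ i, star (u i) ⬝ᵥ u i =
      (((d : ℝ) ^ 2 - 1)⁻¹ : ℝ) * (d * ∑ i, star (u i) ⬝ᵥ u i - star (∑ i, u i) ⬝ᵥ ∑ i, u i) by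
    simp only [b]; push_cast; field_simp; ring]
  refine mul_nonneg (Complex.zero_le_real.2 (inv_nonneg.2 ?_)) (sub_nonneg.2 ?_)
  · have : (2 : ℝ) ≤ d := by exact_mod_cast hd
    nlinarith
  · simpa using star_sum_dotProduct_sum_le u

theorem Phi_mulVec_eq_of_star_dotProduct_Amat_mulVec_eq_zero {d : ℕ} (hd : 2 ≤ d)
    {x : Fin d × (Fin d × Fin d) → ℂ} (hx : star x ⬝ᵥ (Amat d *ᵥ x) = 0) (i : Fin d) :
    (Phi d *ᵥ fun s => x (i, s)) = fun s => x (i, s) := by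
  set u : Fin d → Fin d × Fin d → ℂ := fun i => (1 - Phi d) *ᵥ fun s => x (i, s)
  set S := ∑ i, star (u i) ⬝ᵥ u i
  have hS : 0 ≤ S := Finset.sum_nonneg fun i _ => dotProduct_star_self_nonneg _
  have hκ : (0 : ℂ) < d / (d + 1) := by
    rw [show (d / (d + 1) : ℂ) = ((d / (d + 1) : ℝ) : ℂ) by push_cast; rfl]
    exact Complex.zero_lt_real.2 (by positivity)
  have hlower := mul_sum_star_dotProduct_self_le_sum_aCoef_mul hd u
  rw [star_dotProduct_Amat_mulVec (by omega)] at hx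
  have hgram := (add_eq_zero_iff_of_nonneg ((mul_nonneg hκ.le hS).trans hlower)
    (dotProduct_star_self_nonneg _)).1 hx |>.1
  have hS0 : S = 0 := by
    rw [hgram] at hlower
    exact (mul_eq_zero.1 (le_antisymm hlower (mul_nonneg hκ.le hS))).resolve_left hκ.ne'
  have hu : (1 - Phi d) *ᵥ (fun s => x (i, s)) = 0 := dotProduct_star_self_eq_zero.1 <|
    (Finset.sum_eq_zero_iff_of_nonneg fun i _ => dotProduct_star_self_nonneg _).1 hS0 i
      (Finset.mem_univ i)
  rwa [sub_mulVec, one_mulVec, sub_eq_zero, eq_comm] at hu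

theorem eq_zero_or_eq_zero_of_Phi_mulVec_eq {d : ℕ} (hd : 2 ≤ d) {α β : Fin d → ℂ}
    (h : (Phi d *ᵥ fun s => α s.1 * β s.2) = fun s => α s.1 * β s.2) : α = 0 ∨ β = 0 := by
  have : Nontrivial (Fin d) := Fin.nontrivial_iff_two_le.2 hd
  rw [Phi_eq_vecMulVec, vecMulVec_mulVec, op_smul_eq_smul] at h
  refine eq_zero_or_eq_zero_of_vecMulVec_eq_smul_one
    (c := (star (maxEntangled d) ⬝ᵥ fun s => α s.1 * β s.2) * (√(d : ℝ) : ℂ)⁻¹) ?_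
  ext p q
  have := congrFun h (p, q)
  simp only [Pi.smul_apply, maxEntangled, smul_eq_mul] at this
  by_cases hpq : p = q <;> simp_all [vecMulVec_apply, one_apply]

/-- Matrix-theoretic core of Lemma 3 (one-shot case): ⟨x, A x⟩ = 0 iff for each basis index i,
at most one of α_i, β_i is nonzero. -/
theorem stmt_1 (d : ℕ) (hd : 2 ≤ d)
    (α β : Fin d → (Fin d → ℂ))
    (x : Fin d × (Fin d × Fin d) → ℂ)
    (hx : ∀ i : Fin d, ∀ p q : Fin d, x (i, (p, q)) = α i p * β i q) :
    (∑ s : Fin d × (Fin d × Fin d), ∑ s' : Fin d × (Fin d × Fin d),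
        (starRingEnd ℂ) (x s) * Amat d s s' * x s') = 0 ↔
      ∀ i : Fin d, α i = 0 ∨ β i = 0 := by
  have hform : (∑ s, ∑ s', (starRingEnd ℂ) (x s) * Amat d s s' * x s') =
      star x ⬝ᵥ (Amat d *ᵥ x) := by
    simp only [dotProduct, mulVec, Finset.mul_sum, mul_assoc, Pi.star_apply, Complex.star_def]
  have hblock (i : Fin d) : (fun s : Fin d × Fin d => x (i, s)) = fun s => α i s.1 * β i s.2 :=
    funext fun s => hx i s.1 s.2
  rw [hform]
  constructor
  · intro hQ i
    have := Phi_mulVec_eq_of_star_dotProduct_Amat_mulVec_eq_zero hd hQ i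
    rw [hblock] at this
    exact eq_zero_or_eq_zero_of_Phi_mulVec_eq hd this
  · intro h
    have hx0 : x = 0 := funext fun ⟨i, p, q⟩ => by
      rcases h i with h | h <;> simp [hx, h]
    simp [hx0]
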